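/- Let A and B be unbounded self-adjoint operators on a Hilbert space such that AB = BA (as an equality of unbounded operators, including domains) and σ(AB) ≠ ℂ. Then A and B strongly commute (their spectral projections commute). -/

import Mathlib

/-!
Let `T = AB = BA`, `μ ∉ σ(T)` and `S = (T - μ)⁻¹`. A direct computation with the two
factorisations of `T` shows `S A ⊆ A S` and `S B ⊆ B S`, so `S` commutes with the resolvents
`R_A`, `R_A*` and `R_B`. For `u ∈ D(T)` the identity `ABu = BAu` gives
`(A - i)(B - i)u = (B - i)(A - i)u`, and since `R_A R_B S = S R_A R_B` takes values in
`D(T) = ran S`, this yields `R_A R_B S = R_B R_A S`. Finally `S` has dense range: if `S* w = 0`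
then `u = R_A w` satisfies `⟪u, h⟫ = ⟪u, (T - μ) S h⟫ = ⟪S* (A u), B h⟫ = 0` for `h ∈ D(B)`, by
the symmetry of `A`, so `u = 0` and `w = 0`.
-/

open LinearPMap

set_option linter.unusedSectionVars false

noncomputable section

section BanachDefs

variable {H : Type*} [NormedAddCommGroup H] [NormedSpace ℂ H]

/-- Composition `g ∘ f` of unbounded operators, with the natural (maximal) domain
`{x ∈ dom f : f x ∈ dom g}`. -/
def LinearPMap.pComp (g f : H →ₗ.[ℂ] H) : H →ₗ.[ℂ] H where
  domain := (g.domain.comap f.toFun).map f.domain.subtype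
  toFun := g.toFun ∘ₗ (f.toFun.restrict (p := g.domain.comap f.toFun) (q := g.domain)
      (fun _ hx => hx)) ∘ₗ
    ((Submodule.equivMapOfInjective f.domain.subtype (Submodule.injective_subtype _)
      (g.domain.comap f.toFun)).symm).toLinearMap

/-- `n`-th power of an unbounded operator; `T^0` is the identity on all of `H`. -/
def LinearPMap.pPow (T : H →ₗ.[ℂ] H) : ℕ → (H →ₗ.[ℂ] H)
  | 0 => (LinearMap.id : H →ₗ[ℂ] H).toPMap ⊤
  | n + 1 => T.pComp (T.pPow n)

theorem LinearPMap.pPow_domain_succ_le (T : H →ₗ.[ℂ] H) (n : ℕ) :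
    (T.pPow (n + 1)).domain ≤ (T.pPow n).domain := by
  intro x hx
  simp_rw [pPow, pComp] at hx
  obtain ⟨y, -, rfl⟩ := hx
  exact y.2

theorem LinearPMap.pPow_domain_le (T : H →ₗ.[ℂ] H) {i n : ℕ} (h : i ≤ n) :
    (T.pPow n).domain ≤ (T.pPow i).domain := by
  induction n with
  | zero => exact Nat.le_zero.mp h ▸ le_rfl
  | succ n ih =>
    rcases Nat.lt_succ_iff_lt_or_eq.mp (Nat.lt_succ_of_le h) with h' | rfl
    · exact le_trans (T.pPow_domain_succ_le n) (ih (Nat.lt_succ_iff.mp h'))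
    · exact le_rfl

/-- `p(T)` for a complex polynomial `p`, defined on `D(T^n)` where `n = deg p`. -/
def LinearPMap.polyApp (p : Polynomial ℂ) (T : H →ₗ.[ℂ] H) : H →ₗ.[ℂ] H where
  domain := (T.pPow p.natDegree).domain
  toFun := ∑ i ∈ (Finset.range (p.natDegree + 1)).attach,
    p.coeff i.1 • ((T.pPow i.1).toFun ∘ₗ Submodule.inclusion
      (T.pPow_domain_le (Nat.lt_succ_iff.mp (Finset.mem_range.mp i.2))))

/-- `A - μ • I` with domain `dom A`. -/
def LinearPMap.subConst (A : H →ₗ.[ℂ] H) (μ : ℂ) : H →ₗ.[ℂ] H :=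
  ⟨A.domain, A.toFun - μ • A.domain.subtype⟩

/-- An unbounded operator is boundedly invertible if it is bijective from its domain onto `H`
with an everywhere-defined bounded (continuous) inverse. -/
def LinearPMap.IsBddInvertible (A : H →ₗ.[ℂ] H) : Prop :=
  ∃ B : H →L[ℂ] H, (∀ y : H, ∃ hy : B y ∈ A.domain, A ⟨B y, hy⟩ = y) ∧
    ∀ x : A.domain, B (A x) = (x : H)

/-- The spectrum of an unbounded operator: `μ ∉ σ(A)` iff `A - μI` is bijective with a
bounded everywhere-defined inverse. -/
def LinearPMap.pSpectrum (A : H →ₗ.[ℂ] H) : Set ℂ :=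
  {μ | ¬ (A.subConst μ).IsBddInvertible}

/-- The kernel of an unbounded operator, as a subset of `H`. -/
def LinearPMap.pKer (A : H →ₗ.[ℂ] H) : Set H :=
  {x | ∃ hx : x ∈ A.domain, A ⟨x, hx⟩ = 0}

/-- The range of an unbounded operator. -/
def LinearPMap.pRan (A : H →ₗ.[ℂ] H) : Set H :=
  Set.range fun x : A.domain => A x

/-- A bounded everywhere-defined operator seen as an unbounded operator. -/
def ContinuousLinearMap.toPMapTop (B : H →L[ℂ] H) : H →ₗ.[ℂ] H :=
  (B : H →ₗ[ℂ] H).toPMap ⊤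

end BanachDefs

section HilbertDefs

variable {H : Type*} [NormedAddCommGroup H] [InnerProductSpace ℂ H] [CompleteSpace H]

/-- A densely defined closed operator is quasinormal if `T T* T = T* T T`. -/
def LinearPMap.IsQuasinormal (T : H →ₗ.[ℂ] H) : Prop :=
  T.IsClosed ∧ Dense (T.domain : Set H) ∧
    T.pComp (T.adjoint.pComp T) = T.adjoint.pComp (T.pComp T)

/-- A densely defined closed operator is normal if `T* T = T T*` (an equality of unbounded
operators, domains included). -/
def LinearPMap.IsNormal (T : H →ₗ.[ℂ] H) : Prop :=
  T.IsClosed ∧ Dense (T.domain : Set H) ∧ T.adjoint.pComp T = T.pComp T.adjoint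

/-- A symmetric (not necessarily densely defined) operator. -/
def LinearPMap.IsSymm (T : H →ₗ.[ℂ] H) : Prop :=
  ∀ x y : T.domain, inner ℂ (T x) (y : H) = (inner ℂ (x : H) (T y) : ℂ)

/-- A paranormal operator: `‖Tx‖² ≤ ‖T²x‖ ‖x‖` for every `x ∈ D(T²)`. -/
def LinearPMap.IsParanormal (T : H →ₗ.[ℂ] H) : Prop :=
  ∀ (x : H) (hx : x ∈ T.domain) (hTx : T ⟨x, hx⟩ ∈ T.domain),
    ‖T ⟨x, hx⟩‖ ^ 2 ≤ ‖T ⟨T ⟨x, hx⟩, hTx⟩‖ * ‖x‖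

end HilbertDefs

end


open Function

section Banach

variable {H : Type*} [NormedAddCommGroup H] [NormedSpace ℂ H]

namespace LinearPMap

theorem mem_pComp_domain_iff {g f : H →ₗ.[ℂ] H} {x : H} :
    x ∈ (g.pComp f).domain ↔ ∃ hx : x ∈ f.domain, f ⟨x, hx⟩ ∈ g.domain := by
  constructor
  · rintro ⟨y, hy, rfl⟩
    exact ⟨y.2, hy⟩
  · rintro ⟨hx, hfx⟩
    exact ⟨⟨x, hx⟩, hfx, rfl⟩

theorem pComp_apply {g f : H →ₗ.[ℂ] H} {x : H} (hx : x ∈ (g.pComp f).domain)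
    (hfx : x ∈ f.domain) (hgfx : f ⟨x, hfx⟩ ∈ g.domain) :
    g.pComp f ⟨x, hx⟩ = g ⟨f ⟨x, hfx⟩, hgfx⟩ := by
  have hsymm : (Submodule.equivMapOfInjective f.domain.subtype (Submodule.injective_subtype _)
      (g.domain.comap f.toFun)).symm ⟨x, hx⟩ = ⟨⟨x, hfx⟩, hgfx⟩ := by
    rw [LinearEquiv.symm_apply_eq]
    rfl
  exact congrArg (fun z => g.toFun ((f.toFun.restrict fun _ h => h) z)) hsymm

theorem apply_eq_of_eq_pComp {T g f : H →ₗ.[ℂ] H} (hT : T = g.pComp f) (x : T.domain) :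
    ∃ (hfx : (x : H) ∈ f.domain) (hgfx : f ⟨x, hfx⟩ ∈ g.domain),
      T x = g ⟨f ⟨x, hfx⟩, hgfx⟩ := by
  subst hT
  obtain ⟨hfx, hgfx⟩ := mem_pComp_domain_iff.1 x.2
  exact ⟨hfx, hgfx, pComp_apply x.2 hfx hgfx⟩

theorem mem_domain_of_eq_pComp {T g f : H →ₗ.[ℂ] H} (hT : T = g.pComp f) {x : H}
    (hfx : x ∈ f.domain) (hgfx : f ⟨x, hfx⟩ ∈ g.domain) :
    ∃ hx : x ∈ T.domain, T ⟨x, hx⟩ = g ⟨f ⟨x, hfx⟩, hgfx⟩ := by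
  subst hT
  have hx := mem_pComp_domain_iff.2 ⟨hfx, hgfx⟩
  exact ⟨hx, pComp_apply hx hfx hgfx⟩

theorem apply_sub_smul (A : H →ₗ.[ℂ] H) {x y : H} (hx : x ∈ A.domain) (hy : y ∈ A.domain)
    (c : ℂ) : A ⟨x - c • y, A.domain.sub_mem hx (A.domain.smul_mem c hy)⟩ =
      A ⟨x, hx⟩ - c • A ⟨y, hy⟩ := by
  rw [← LinearPMap.map_smul, ← LinearPMap.map_sub]
  rfl

def IsBddInverse (A : H →ₗ.[ℂ] H) (R : H →L[ℂ] H) : Prop :=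
  (∀ y : H, ∃ hy : R y ∈ A.domain, A ⟨R y, hy⟩ = y) ∧ ∀ x : A.domain, R (A x) = (x : H)

variable {A : H →ₗ.[ℂ] H} {R : H →L[ℂ] H}

theorem IsBddInverse.injective (hR : A.IsBddInverse R) : Injective R := by
  refine (injective_iff_map_eq_zero R).2 fun y hy => ?_
  obtain ⟨hRy, hy'⟩ := hR.1 y
  rw [← hy']
  simp_rw [hy]
  exact A.map_zero

theorem IsBddInverse.subConst_right_inv {c : ℂ} (hR : (A.subConst c).IsBddInverse R) (y : H) :
    ∃ hy : R y ∈ A.domain, A ⟨R y, hy⟩ = y + c • R y := by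
  obtain ⟨hy, h⟩ := hR.1 y
  exact ⟨hy, eq_add_of_sub_eq h⟩

theorem IsBddInverse.subConst_left_inv {c : ℂ} (hR : (A.subConst c).IsBddInverse R) {x : H}
    (hx : x ∈ A.domain) : R (A ⟨x, hx⟩ - c • x) = x :=
  hR.2 ⟨x, hx⟩

end LinearPMap

/-- `S A ⊆ A S`. -/
def ContinuousLinearMap.CommutesWithPMap (S : H →L[ℂ] H) (A : H →ₗ.[ℂ] H) : Prop :=
  ∀ x : A.domain, ∃ hx : S x ∈ A.domain, A ⟨S x, hx⟩ = S (A x)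

namespace ContinuousLinearMap

variable {S : H →L[ℂ] H} {A : H →ₗ.[ℂ] H}

theorem CommutesWithPMap.subConst (hS : S.CommutesWithPMap A) (c : ℂ) :
    S.CommutesWithPMap (A.subConst c) := fun x => by
  obtain ⟨hx, h⟩ := hS ⟨x, x.2⟩
  refine ⟨hx, ?_⟩
  change A ⟨S x, hx⟩ - c • S x = S (A ⟨x, x.2⟩ - c • x)
  rw [h, _root_.map_sub, _root_.map_smul]

theorem CommutesWithPMap.commute {R : H →L[ℂ] H} (hS : S.CommutesWithPMap A)
    (hR : A.IsBddInverse R) : Commute S R := by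
  ext y
  obtain ⟨hRy, hy⟩ := hR.1 y
  obtain ⟨hSRy, h⟩ := hS ⟨R y, hRy⟩
  have := hR.2 ⟨S (R y), hSRy⟩
  simp only [h, hy] at this
  exact this.symm

theorem commutesWithPMap_of_isBddInverse {T B : H →ₗ.[ℂ] H} (hAB : T = A.pComp B)
    (hBA : T = B.pComp A) {μ : ℂ} (hS : (T.subConst μ).IsBddInverse S) :
    S.CommutesWithPMap A := by
  rintro ⟨y, hy⟩
  obtain ⟨hSy, hTSy⟩ := hS.subConst_right_inv y
  obtain ⟨hASy, hBASy, hT⟩ := apply_eq_of_eq_pComp hBA ⟨S y, hSy⟩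
  refine ⟨hASy, ?_⟩
  have hBASy_eq : B ⟨A ⟨S y, hASy⟩, hBASy⟩ = y + μ • S y := hT.symm.trans hTSy
  have hmem : B ⟨A ⟨S y, hASy⟩, hBASy⟩ ∈ A.domain :=
    hBASy_eq ▸ A.domain.add_mem hy (A.domain.smul_mem μ hASy)
  obtain ⟨hTASy, hTASy_eq⟩ := mem_domain_of_eq_pComp hAB hBASy hmem
  have hsplit : (⟨_, hmem⟩ : A.domain) = ⟨y, hy⟩ + μ • ⟨S y, hASy⟩ := Subtype.ext hBASy_eq
  rw [hsplit, LinearPMap.map_add, LinearPMap.map_smul] at hTASy_eq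
  have := hS.subConst_left_inv hTASy
  rw [hTASy_eq, add_sub_cancel_right] at this
  exact this.symm

end ContinuousLinearMap

theorem LinearPMap.IsBddInverse.apply_comm_of_mem_pComp {A B : H →ₗ.[ℂ] H}
    (hcomm : A.pComp B = B.pComp A) {a b : ℂ} {RA RB : H →L[ℂ] H}
    (hRA : (A.subConst a).IsBddInverse RA) (hRB : (B.subConst b).IsBddInverse RB) {z : H}
    (hz : RA (RB z) ∈ (A.pComp B).domain) : RB (RA z) = RA (RB z) := by
  set u := RA (RB z)
  obtain ⟨hBu, hABu, hT⟩ := apply_eq_of_eq_pComp rfl ⟨u, hz⟩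
  obtain ⟨hAu, hBAu, hT'⟩ := apply_eq_of_eq_pComp hcomm ⟨u, hz⟩
  obtain ⟨_, hAu_eq⟩ := hRA.subConst_right_inv (RB z)
  obtain ⟨hRBz, hBRBz⟩ := hRB.subConst_right_inv z
  have hsplit : (⟨_, hBAu⟩ : B.domain) = ⟨RB z, hRBz⟩ + a • ⟨u, hBu⟩ := Subtype.ext hAu_eq
  rw [hsplit, LinearPMap.map_add, LinearPMap.map_smul, hBRBz] at hT'
  have hv : B ⟨u, hBu⟩ - b • u ∈ A.domain := A.domain.sub_mem hABu (A.domain.smul_mem b hAu)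
  -- `(A - a)(B - b)u = (B - b)(A - a)u = (B - b) R_B z = z`
  have hRAz : RA z = B ⟨u, hBu⟩ - b • u := by
    have := hRA.subConst_left_inv hv
    rw [apply_sub_smul A hABu hAu, ← hT, hT', hAu_eq] at this
    rw [← this]
    congr 1
    module
  rw [hRAz]
  exact hRB.subConst_left_inv hBu

end Banach

section Hilbert

variable {H : Type*} [NormedAddCommGroup H] [InnerProductSpace ℂ H] [CompleteSpace H]

local notation "⟪" x ", " y "⟫" => @inner ℂ _ _ x y

theorem LinearPMap.isSymm_of_adjoint_eq {A : H →ₗ.[ℂ] H} (hd : Dense (A.domain : Set H))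
    (hsa : A.adjoint = A) : A.IsSymm := by
  have h := adjoint_isFormalAdjoint hd (T := A)
  rw [hsa] at h
  exact h

theorem LinearPMap.IsBddInverse.adjoint_subConst {A : H →ₗ.[ℂ] H}
    (hd : Dense (A.domain : Set H)) (hsa : A.adjoint = A) {c : ℂ} {R : H →L[ℂ] H}
    (hR : (A.subConst c).IsBddInverse R) :
    (A.subConst (starRingEnd ℂ c)).IsBddInverse (star R) := by
  rw [ContinuousLinearMap.star_eq_adjoint]
  constructor
  · intro y
    have key : ∀ x : A.domain,
        ⟪y + starRingEnd ℂ c • R.adjoint y, (x : H)⟫ = ⟪R.adjoint y, A x⟫ := by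
      intro x
      have hRAx : R (A x) = x + c • R x := by
        have := hR.subConst_left_inv x.2
        rwa [_root_.map_sub, _root_.map_smul, sub_eq_iff_eq_add] at this
      rw [ContinuousLinearMap.adjoint_inner_left, hRAx, inner_add_right, inner_smul_right,
        inner_add_left, inner_smul_left, ← ContinuousLinearMap.adjoint_inner_left]
      simp
    have hmem : R.adjoint y ∈ A.adjoint.domain := mem_adjoint_domain_of_exists _ ⟨_, key⟩
    refine ⟨hsa ▸ hmem, ?_⟩
    change A ⟨_, hsa ▸ hmem⟩ - starRingEnd ℂ c • R.adjoint y = y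
    rw [← (LinearPMap.ext_iff.1 hsa).2 (hf := hmem), adjoint_apply_eq hd ⟨_, hmem⟩ key,
      add_sub_cancel_right]
  · rintro ⟨x, hx⟩
    apply ext_inner_right ℂ
    intro g
    obtain ⟨hg, hgval⟩ := hR.subConst_right_inv g
    change ⟪R.adjoint (A ⟨x, hx⟩ - starRingEnd ℂ c • x), g⟫ = ⟪x, g⟫
    rw [ContinuousLinearMap.adjoint_inner_left, inner_sub_left, inner_smul_left,
      isSymm_of_adjoint_eq hd hsa ⟨x, hx⟩ ⟨R g, hg⟩]
    simp [hgval]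

theorem LinearPMap.injective_star_of_isBddInverse_pComp {A B : H →ₗ.[ℂ] H} (hA : A.IsSymm)
    (hdB : Dense (B.domain : Set H)) {a μ : ℂ} {RA S : H →L[ℂ] H}
    (hRA : (A.subConst a).IsBddInverse RA) (hS : ((A.pComp B).subConst μ).IsBddInverse S)
    (hSB : S.CommutesWithPMap B) (hSRA : Commute (star S) RA) : Injective ⇑(star S) := by
  rw [ContinuousLinearMap.star_eq_adjoint] at hSRA ⊢
  refine (injective_iff_map_eq_zero _).2 fun w hw => hRA.injective ?_
  have hSu : S.adjoint (RA w) = 0 := by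
    rw [← mul_apply_eq_comp, hSRA.eq, mul_apply_eq_comp, hw, _root_.map_zero]
  rw [_root_.map_zero]
  obtain ⟨hu, hAu⟩ := hRA.subConst_right_inv w
  refine hdB.eq_zero_of_inner_left ℂ fun h hh => ?_
  obtain ⟨hSh, hTSh⟩ := hS.subConst_right_inv h
  obtain ⟨hBSh, hABSh, hT⟩ := apply_eq_of_eq_pComp rfl ⟨S h, hSh⟩
  obtain ⟨_, hBS⟩ := hSB ⟨h, hh⟩
  calc ⟪RA w, h⟫ = ⟪RA w, A ⟨_, hABSh⟩⟫ - μ * ⟪S.adjoint (RA w), h⟫ := by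
        rw [← hT, hTSh, ContinuousLinearMap.adjoint_inner_left, inner_add_right,
          inner_smul_right]
        ring
    _ = ⟪A ⟨RA w, hu⟩, B ⟨S h, hBSh⟩⟫ := by
        rw [hSu, inner_zero_left, mul_zero, sub_zero]
        exact (hA ⟨RA w, hu⟩ ⟨_, hABSh⟩).symm
    _ = ⟪S.adjoint (A ⟨RA w, hu⟩), B ⟨h, hh⟩⟫ := by
        rw [hBS, ContinuousLinearMap.adjoint_inner_left]
    _ = 0 := by
        rw [hAu, _root_.map_add, _root_.map_smul, hw, hSu]
        simp

theorem ContinuousLinearMap.eq_of_mul_eq_mul_of_injective_star {E F S : H →L[ℂ] H}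
    (hS : Injective ⇑(star S)) (h : E * S = F * S) : E = F := by
  apply star_injective
  ext g
  apply hS
  have := congrArg star h
  simp only [star_mul] at this
  exact congrArg (· g) this

end Hilbert

/-- Strong commutation is expressed by the commutation of the resolvents `(A - i)⁻¹` and
`(B - i)⁻¹`, an equivalent formulation. -/
theorem statement_4_general {H : Type*} [NormedAddCommGroup H] [InnerProductSpace ℂ H] [CompleteSpace H]
    (A B : H →ₗ.[ℂ] H)
    (hdA : Dense (A.domain : Set H)) (hdB : Dense (B.domain : Set H))
    (hsaA : A.adjoint = A)
    (hcomm : A.pComp B = B.pComp A)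
    (hspec : (A.pComp B).pSpectrum ≠ Set.univ) :
    ∀ RA RB : H →L[ℂ] H,
      ((∀ y : H, ∃ hy : RA y ∈ (A.subConst Complex.I).domain,
          (A.subConst Complex.I) ⟨RA y, hy⟩ = y) ∧
        ∀ x : (A.subConst Complex.I).domain, RA ((A.subConst Complex.I) x) = (x : H)) →
      ((∀ y : H, ∃ hy : RB y ∈ (B.subConst Complex.I).domain,
          (B.subConst Complex.I) ⟨RB y, hy⟩ = y) ∧
        ∀ x : (B.subConst Complex.I).domain, RB ((B.subConst Complex.I) x) = (x : H)) →
      Commute RA RB := by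
  intro RA RB (hRA : (A.subConst Complex.I).IsBddInverse RA)
    (hRB : (B.subConst Complex.I).IsBddInverse RB)
  obtain ⟨μ, S, hS⟩ : ∃ μ S, ((A.pComp B).subConst μ).IsBddInverse S := by
    obtain ⟨μ, hμ⟩ := (Set.ne_univ_iff_exists_notMem _).1 hspec
    exact ⟨μ, not_not.1 hμ⟩
  have hSA := ContinuousLinearMap.commutesWithPMap_of_isBddInverse rfl hcomm hS
  have hSB := ContinuousLinearMap.commutesWithPMap_of_isBddInverse hcomm rfl hS
  have hSRA : Commute S RA := (hSA.subConst _).commute hRA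
  have hSRB : Commute S RB := (hSB.subConst _).commute hRB
  have hSRA' : Commute S (star RA) := (hSA.subConst _).commute (hRA.adjoint_subConst hdA hsaA)
  have hS_inj := injective_star_of_isBddInverse_pComp (isSymm_of_adjoint_eq hdA hsaA) hdB hRA
    hS hSB (by simpa using hSRA'.star_star)
  refine ContinuousLinearMap.eq_of_mul_eq_mul_of_injective_star hS_inj ?_
  ext y
  have hmem : RA (RB (S y)) ∈ (A.pComp B).domain := by
    have h := congr($((hSRA.mul_right hSRB).eq) y)
    simp only [mul_apply_eq_comp] at h
    exact h ▸ (hS.1 _).1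
  exact (hRA.apply_comm_of_mem_pComp hcomm hRB hmem).symm

/-- if `A`, `B` are self-adjoint, `AB = BA` (equality of unbounded operators,
domains included) and `σ(AB) ≠ ℂ`, then `A` and `B` strongly commute.  Strong commutation
(commutation of all spectral projections) is expressed through the standard equivalent
formulation that the bounded resolvents `(A - i)⁻¹` and `(B - i)⁻¹` commute. -/
theorem statement_4 {H : Type*} [NormedAddCommGroup H] [InnerProductSpace ℂ H] [CompleteSpace H]
    (A B : H →ₗ.[ℂ] H)
    (hdA : Dense (A.domain : Set H)) (hdB : Dense (B.domain : Set H))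
    (hsaA : A.adjoint = A) (hsaB : B.adjoint = B)
    (hcomm : A.pComp B = B.pComp A)
    (hspec : (A.pComp B).pSpectrum ≠ Set.univ) :
    ∀ RA RB : H →L[ℂ] H,
      ((∀ y : H, ∃ hy : RA y ∈ (A.subConst Complex.I).domain,
          (A.subConst Complex.I) ⟨RA y, hy⟩ = y) ∧
        ∀ x : (A.subConst Complex.I).domain, RA ((A.subConst Complex.I) x) = (x : H)) →
      ((∀ y : H, ∃ hy : RB y ∈ (B.subConst Complex.I).domain,
          (B.subConst Complex.I) ⟨RB y, hy⟩ = y) ∧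
        ∀ x : (B.subConst Complex.I).domain, RB ((B.subConst Complex.I) x) = (x : H)) →
      Commute RA RB :=
  statement_4_general A B hdA hdB hsaA hcomm hspec
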